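/- arXiv:1001.0038 — 2 statements merged into one kernel-verified Lean document; each statement's English description precedes it below -/
import Mathlib

section
/- Let (X,ρ) be a metric space, μ a Borel measure on X, κ ∈ (0,1), and m, τ, A > 0. For each j ∈ ℤ let 𝒬_j and ℛ_j be countable families of pairwise disjoint Borel subsets of X, each set having positive finite μ-measure and diameter at most κ^j, and suppose that for every Q ∈ 𝒬_j and every x ∈ Q one has μ(B(x,r)) ≤ A·r^m for all r ≥ κ^j, and likewise for every R ∈ ℛ_j and every y ∈ R. For Q ∈ 𝒬_i and R ∈ ℛ_j with i ≥ j set s(Q) := κ^i, s(R) := κ^j, D(Q,R) := s(Q) + s(R) + dist(Q,R), and T_{Q,R} := s(Q)^{τ/2} s(R)^{τ/2} D(Q,R)^{−(m+τ)} √(μ(Q)μ(R)). Then for all families of nonnegative numbers (a_Q)_{Q ∈ ⋃_i 𝒬_i} and (b_R)_{R ∈ ⋃_j ℛ_j}: Σ_{i ≥ j} Σ_{Q ∈ 𝒬_i, R ∈ ℛ_j} T_{Q,R} a_Q b_R ≤ C · (Σ_Q a_Q²)^{1/2} (Σ_R b_R²)^{1/2}, where C depends only on A, m, τ, κ. -/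
/-!
Schur test: writing `T_{Q,R} = K(Q,R) √(μ(Q) μ(R))` with
`K(Q,R) = s(Q)^{τ/2} s(R)^{τ/2} D(Q,R)^{-(m+τ)}` (`decayKernel`), Cauchy–Schwarz applied to
`T_{Q,R} a_Q b_R = ((K μ(R))^{1/2} a_Q) · ((K μ(Q))^{1/2} b_R)` reduces the bound to uniform
bounds on `Σ_R K(Q,R) μ(R)` and `Σ_Q K(Q,R) μ(Q)`. As `K` is symmetric, both are instances of one
estimate for a fixed set `P` of scale `κ^p` against a lattice. Fix `x ∈ P`; the sets `S` of one
generation `n` see `D(P,S) ≥ (δ + dist(x,S))/2` with `δ = max(κ^p, κ^n)`. Sorting them into dyadic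
annuli `dist(x,S) ≈ 2^k δ`, disjointness and the growth bound at scale `2^{k+2} δ` give
`Σ_S μ(S) (δ + dist(x,S))^{-(m+τ)} ≲ δ^{-τ}`, so generation `n` contributes
`≲ κ^{τ|n-p|/2}`, which is summable over `n ∈ ℤ`.
-/

open MeasureTheory Metric

noncomputable def setDist {X : Type*} [MetricSpace X] (S T : Set X) : ℝ :=
  sInf (Set.image2 dist S T)

open scoped ENNReal

section SetDist

variable {X : Type*} [MetricSpace X]

lemma setDist_nonneg (S T : Set X) : 0 ≤ setDist S T :=
  Real.sInf_nonneg (by rintro _ ⟨x, -, y, -, rfl⟩; exact dist_nonneg)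

lemma setDist_comm (S T : Set X) : setDist S T = setDist T S := by
  rw [setDist, setDist, ← Set.image2_swap]
  simp only [dist_comm]

lemma dist_le_of_ediam_le_ofReal {S : Set X} {x y : X} {δ : ℝ} (hδ : 0 ≤ δ) (hx : x ∈ S)
    (hy : y ∈ S) (hS : ediam S ≤ ENNReal.ofReal δ) : dist x y ≤ δ := by
  have := edist_le_of_ediam_le hx hy hS
  rwa [edist_dist, ENNReal.ofReal_le_ofReal_iff hδ] at this

lemma infDist_le_add_setDist {P S : Set X} {x : X} {s : ℝ} (hs : 0 ≤ s) (hx : x ∈ P)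
    (hP : ediam P ≤ ENNReal.ofReal s) : infDist x S ≤ s + setDist P S := by
  rcases S.eq_empty_or_nonempty with rfl | hS
  · simpa [setDist] using hs
  rw [← sub_le_iff_le_add']
  refine le_csInf (Set.Nonempty.image2 ⟨x, hx⟩ hS) ?_
  rintro _ ⟨x', hx', y, hy, rfl⟩
  rw [sub_le_iff_le_add']
  calc infDist x S ≤ dist x y := infDist_le_dist_of_mem hy
    _ ≤ dist x x' + dist x' y := dist_triangle _ _ _
    _ ≤ s + dist x' y := by grw [dist_le_of_ediam_le_ofReal hs hx hx' hP]

lemma dist_lt_add_of_infDist_lt {T : Set X} {x z : X} {r δ : ℝ} (hδ : 0 ≤ δ)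
    (hT : ediam T ≤ ENNReal.ofReal δ) (hz : z ∈ T) (h : infDist x T < r) :
    dist z x < r + δ := by
  obtain ⟨y, hy, hxy⟩ := (infDist_lt_iff ⟨z, hz⟩).1 h
  have := dist_le_of_ediam_le_ofReal hδ hz hy hT
  linarith [dist_triangle z y x, dist_comm x y]

end SetDist

section Schur

variable {α β : Type*}

lemma tsum_mul_le_L2_mul_L2 (f g : α → ℝ≥0∞) :
    ∑' i, f i * g i ≤ (∑' i, f i ^ 2) ^ (1 / 2 : ℝ) * (∑' i, g i ^ 2) ^ (1 / 2 : ℝ) := by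
  rw [ENNReal.tsum_eq_iSup_sum]
  refine iSup_le fun s => ?_
  have h := ENNReal.inner_le_Lp_mul_Lq s f g Real.HolderConjugate.two_two
  simp only [ENNReal.rpow_ofNat] at h
  refine h.trans ?_
  gcongr <;> exact ENNReal.sum_le_tsum s

lemma rpow_half_sq (x : ℝ≥0∞) : (x ^ (1 / 2 : ℝ)) ^ 2 = x := by
  simpa [one_div] using ENNReal.rpow_inv_natCast_pow two_ne_zero x

lemma rpow_half_mul_rpow_half (x : ℝ≥0∞) : x ^ (1 / 2 : ℝ) * x ^ (1 / 2 : ℝ) = x := by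
  rw [← sq, rpow_half_sq]

theorem schur_test (K : α → β → ℝ≥0∞) (u : α → ℝ≥0∞) (v : β → ℝ≥0∞) {C : ℝ≥0∞}
    (hrow : ∀ i, ∑' j, K i j * v j ≤ C) (hcol : ∀ j, ∑' i, K i j * u i ≤ C)
    (a : α → ℝ≥0∞) (b : β → ℝ≥0∞) :
    ∑' i, ∑' j, K i j * (u i * v j) ^ (1 / 2 : ℝ) * a i * b j ≤
      C * (∑' i, a i ^ 2) ^ (1 / 2 : ℝ) * (∑' j, b j ^ 2) ^ (1 / 2 : ℝ) := by
  have half : (0 : ℝ) ≤ 1 / 2 := by norm_num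
  set f : α × β → ℝ≥0∞ := fun p => (K p.1 p.2 * v p.2) ^ (1 / 2 : ℝ) * a p.1
  set g : α × β → ℝ≥0∞ := fun p => (K p.1 p.2 * u p.1) ^ (1 / 2 : ℝ) * b p.2
  have hfg : ∀ i j, K i j * (u i * v j) ^ (1 / 2 : ℝ) * a i * b j = f (i, j) * g (i, j) := by
    intro i j
    simp only [f, g, ENNReal.mul_rpow_of_nonneg _ _ half]
    conv_lhs => rw [← rpow_half_mul_rpow_half (K i j)]
    ring
  have hf : ∑' p, f p ^ 2 ≤ C * ∑' i, a i ^ 2 := by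
    simp only [f, mul_pow, rpow_half_sq]
    rw [ENNReal.tsum_prod', ← ENNReal.tsum_mul_left]
    refine ENNReal.tsum_le_tsum fun i => ?_
    dsimp only
    rw [ENNReal.tsum_mul_right]
    gcongr
    exact hrow i
  have hg : ∑' p, g p ^ 2 ≤ C * ∑' j, b j ^ 2 := by
    simp only [g, mul_pow, rpow_half_sq]
    rw [ENNReal.tsum_prod', ENNReal.tsum_comm, ← ENNReal.tsum_mul_left]
    refine ENNReal.tsum_le_tsum fun j => ?_
    dsimp only
    rw [ENNReal.tsum_mul_right]
    gcongr
    exact hcol j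
  calc ∑' i, ∑' j, K i j * (u i * v j) ^ (1 / 2 : ℝ) * a i * b j = ∑' p, f p * g p := by
        rw [ENNReal.tsum_prod']; simp only [hfg]
    _ ≤ (∑' p, f p ^ 2) ^ (1 / 2 : ℝ) * (∑' p, g p ^ 2) ^ (1 / 2 : ℝ) :=
        tsum_mul_le_L2_mul_L2 f g
    _ ≤ (C * ∑' i, a i ^ 2) ^ (1 / 2 : ℝ) * (C * ∑' j, b j ^ 2) ^ (1 / 2 : ℝ) := by gcongr
    _ = C * (∑' i, a i ^ 2) ^ (1 / 2 : ℝ) * (∑' j, b j ^ 2) ^ (1 / 2 : ℝ) := by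
        rw [ENNReal.mul_rpow_of_nonneg _ _ half, ENNReal.mul_rpow_of_nonneg _ _ half]
        conv_rhs => rw [← rpow_half_mul_rpow_half C]
        ring

end Schur

lemma ofReal_sqrt_toReal_mul_toReal {x y : ℝ≥0∞} (hx : x ≠ ⊤) (hy : y ≠ ⊤) :
    ENNReal.ofReal (√(x.toReal * y.toReal)) = (x * y) ^ (1 / 2 : ℝ) := by
  rw [← ENNReal.toReal_mul, Real.sqrt_eq_rpow,
    ← ENNReal.ofReal_rpow_of_nonneg ENNReal.toReal_nonneg (by norm_num),
    ENNReal.ofReal_toReal (ENNReal.mul_ne_top hx hy)]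

lemma tsum_ofReal_mul_geometric {c q : ℝ} (hc : 0 ≤ c) (hq0 : 0 ≤ q) (hq1 : q < 1) :
    ∑' k : ℕ, ENNReal.ofReal (c * q ^ k) = ENNReal.ofReal (c / (1 - q)) := by
  rw [← ENNReal.ofReal_tsum_of_nonneg (fun k => by positivity)
    ((summable_geometric_of_lt_one hq0 hq1).mul_left c), tsum_mul_left,
    tsum_geometric_of_lt_one hq0 hq1, div_eq_mul_inv]

lemma tsum_ofReal_mul_geometric_natAbs_le {c q : ℝ} (hc : 0 ≤ c) (hq0 : 0 ≤ q) (hq1 : q < 1)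
    (p : ℤ) :
    ∑' n : ℤ, ENNReal.ofReal (c * q ^ (n - p).natAbs) ≤ ENNReal.ofReal (2 * c / (1 - q)) := by
  rw [← (Equiv.addRight p).tsum_eq, tsum_of_nat_of_neg_add_one ENNReal.summable
    ENNReal.summable]
  simp only [Equiv.coe_addRight, add_sub_cancel_right, Int.natAbs_natCast,
    Int.natAbs_neg]
  have hle : ∀ n : ℕ, ENNReal.ofReal (c * q ^ ((n : ℤ) + 1).natAbs) ≤ ENNReal.ofReal (c * q ^ n) :=
    fun n => ENNReal.ofReal_le_ofReal <| mul_le_mul_of_nonneg_left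
      (pow_le_pow_of_le_one hq0 hq1.le (by omega)) hc
  grw [hle, tsum_ofReal_mul_geometric hc hq0 hq1, ← ENNReal.ofReal_add (by bound) (by bound)]
  rw [← add_div, two_mul]

noncomputable def decayKernel (m τ s t d : ℝ) : ℝ :=
  s ^ (τ / 2) * t ^ (τ / 2) / (s + t + d) ^ (m + τ)

lemma decayKernel_comm (m τ s t d : ℝ) : decayKernel m τ s t d = decayKernel m τ t s d := by
  rw [decayKernel, decayKernel, mul_comm, add_comm s t]

lemma decayKernel_le {m τ s t d e : ℝ} (hmτ : 0 ≤ m + τ) (hs : 0 < s) (ht : 0 < t)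
    (hd : 0 ≤ d) (he : 0 ≤ e) (hed : e ≤ s + d) :
    decayKernel m τ s t d ≤
      2 ^ (m + τ) * (s ^ (τ / 2) * t ^ (τ / 2)) * (max s t + e) ^ (-(m + τ)) := by
  have hX : 0 < max s t + e := by positivity
  have hXD : (max s t + e) / 2 ≤ s + t + d := by
    have := max_le_add_of_nonneg hs.le ht.le
    linarith
  have hD : (s + t + d) ^ (-(m + τ)) ≤ ((max s t + e) / 2) ^ (-(m + τ)) :=
    Real.rpow_le_rpow_of_nonpos (by positivity) hXD (by linarith)
  rw [Real.div_rpow hX.le zero_le_two, Real.rpow_neg zero_le_two, div_inv_eq_mul] at hD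
  rw [decayKernel, div_eq_mul_inv, ← Real.rpow_neg (by positivity)]
  calc s ^ (τ / 2) * t ^ (τ / 2) * (s + t + d) ^ (-(m + τ))
      ≤ s ^ (τ / 2) * t ^ (τ / 2) * ((max s t + e) ^ (-(m + τ)) * 2 ^ (m + τ)) := by gcongr
    _ = _ := by ring

lemma zpow_rpow_mul_zpow_rpow_mul_max_rpow_neg {κ τ : ℝ} (hκ0 : 0 < κ) (hκ1 : κ ≤ 1)
    (p n : ℤ) :
    (κ ^ p) ^ (τ / 2) * (κ ^ n) ^ (τ / 2) * max (κ ^ p) (κ ^ n) ^ (-τ) =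
      (κ ^ (τ / 2)) ^ (n - p).natAbs := by
  wlog hpn : p ≤ n generalizing p n
  · rw [mul_comm ((κ ^ p) ^ (τ / 2)), max_comm, ← Int.natAbs_neg, neg_sub]
    exact this n p (by omega)
  rw [max_eq_left (zpow_le_zpow_right_of_le_one₀ hκ0 hκ1 hpn), ← Real.rpow_natCast,
    Nat.cast_natAbs, abs_of_nonneg (by omega)]
  simp only [← Real.rpow_intCast, ← Real.rpow_mul hκ0.le, ← Real.rpow_add hκ0]
  push_cast
  ring_nf

lemma div_two_rpow_neg_mul_mul_rpow {m τ A r : ℝ} (hr : 0 < r) :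
    (r / 2) ^ (-(m + τ)) * (A * (2 * (2 * r)) ^ m) = A * 2 ^ (m + τ) * 4 ^ m * r ^ (-τ) := by
  rw [Real.div_rpow hr.le zero_le_two, Real.rpow_neg zero_le_two, div_inv_eq_mul,
    ← mul_assoc 2 2 r, Real.mul_rpow (by norm_num) hr.le,
    show -τ = m + -(m + τ) by ring, Real.rpow_add hr]
  ring_nf

noncomputable def packingConst (m τ A : ℝ) : ℝ :=
  A * 2 ^ (m + τ) * 4 ^ m / (1 - 2 ^ (-τ))

lemma packingConst_pos {m τ A : ℝ} (hτ : 0 < τ) (hA : 0 < A) : 0 < packingConst m τ A :=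
  div_pos (by positivity)
    (sub_pos.2 (Real.rpow_lt_one_of_one_lt_of_neg one_lt_two (by linarith)))

lemma packingConst_nonneg {m τ A : ℝ} (hτ : 0 < τ) (hA : 0 ≤ A) : 0 ≤ packingConst m τ A :=
  div_nonneg (by positivity)
    (sub_nonneg.2 (Real.rpow_lt_one_of_one_lt_of_neg one_lt_two (by linarith)).le)

noncomputable def latticeConst (m τ A κ : ℝ) : ℝ :=
  2 * (2 ^ (m + τ) * packingConst m τ A) / (1 - κ ^ (τ / 2))

lemma latticeConst_pos {m τ A κ : ℝ} (hτ : 0 < τ) (hA : 0 < A) (hκ0 : 0 < κ) (hκ1 : κ < 1) :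
    0 < latticeConst m τ A κ :=
  have := packingConst_pos (m := m) hτ hA
  div_pos (by positivity) (sub_pos.2 (Real.rpow_lt_one hκ0.le hκ1 (by linarith)))

section Packing

open Function

variable {X : Type*} [MetricSpace X] [MeasurableSpace X] {μ : Measure X} {m τ A δ : ℝ}
  {ι : Type*} [Countable ι] {S : ι → Set X}

lemma tsum_measure_le_of_subset_ball (hmeas : ∀ l, MeasurableSet (S l))
    (hdisj : Pairwise (Disjoint on S))
    (hgrowth : ∀ l, ∀ y ∈ S l, ∀ r, δ ≤ r → μ (ball y r) ≤ ENNReal.ofReal (A * r ^ m))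
    {x : X} {R : ℝ} (hR : δ ≤ 2 * R) (hsub : ∀ l, S l ⊆ ball x R) :
    ∑' l, μ (S l) ≤ ENNReal.ofReal (A * (2 * R) ^ m) := by
  rw [← measure_iUnion hdisj hmeas]
  rcases (⋃ l, S l).eq_empty_or_nonempty with h | ⟨z, hz⟩
  · simp [h]
  obtain ⟨l, hzl⟩ := Set.mem_iUnion.1 hz
  refine (measure_mono fun y hy => ?_).trans (hgrowth l z hzl _ hR)
  obtain ⟨l', hy⟩ := Set.mem_iUnion.1 hy
  have hzx : dist x z < R := by rw [dist_comm]; exact hsub l hzl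
  exact ball_subset_ball' (by linarith) (hsub l' hy)

lemma tsum_measure_mul_rpow_le_of_subset_annulus (hmτ : 0 ≤ m + τ)
    (hmeas : ∀ l, MeasurableSet (S l)) (hdisj : Pairwise (Disjoint on S))
    (hgrowth : ∀ l, ∀ y ∈ S l, ∀ r, δ ≤ r → μ (ball y r) ≤ ENNReal.ofReal (A * r ^ m))
    {x : X} {r : ℝ} (hr : 0 < r) (hδr : δ ≤ 4 * r) (d : ι → ℝ) (hfar : ∀ l, r / 2 ≤ d l)
    (hnear : ∀ l, S l ⊆ ball x (2 * r)) :
    ∑' l, μ (S l) * ENNReal.ofReal (d l ^ (-(m + τ))) ≤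
      ENNReal.ofReal (A * 2 ^ (m + τ) * 4 ^ m * r ^ (-τ)) := by
  calc ∑' l, μ (S l) * ENNReal.ofReal (d l ^ (-(m + τ)))
      ≤ ∑' l, μ (S l) * ENNReal.ofReal ((r / 2) ^ (-(m + τ))) := by
        refine ENNReal.tsum_le_tsum fun l => mul_le_mul' le_rfl (ENNReal.ofReal_le_ofReal ?_)
        exact Real.rpow_le_rpow_of_nonpos (half_pos hr) (hfar l) (by linarith)
    _ = (∑' l, μ (S l)) * ENNReal.ofReal ((r / 2) ^ (-(m + τ))) := ENNReal.tsum_mul_right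
    _ ≤ ENNReal.ofReal (A * (2 * (2 * r)) ^ m) * ENNReal.ofReal ((r / 2) ^ (-(m + τ))) := by
        gcongr
        exact tsum_measure_le_of_subset_ball hmeas hdisj hgrowth (by linarith) hnear
    _ = ENNReal.ofReal (A * 2 ^ (m + τ) * 4 ^ m * r ^ (-τ)) := by
        rw [mul_comm, ← ENNReal.ofReal_mul (by positivity), div_two_rpow_neg_mul_mul_rpow hr]

theorem tsum_measure_mul_rpow_infDist_le (hmτ : 0 ≤ m + τ) (hτ : 0 < τ) (hA : 0 ≤ A)
    (hδ : 0 < δ) (hmeas : ∀ l, MeasurableSet (S l)) (hdisj : Pairwise (Disjoint on S))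
    (hdiam : ∀ l, ediam (S l) ≤ ENNReal.ofReal δ)
    (hgrowth : ∀ l, ∀ y ∈ S l, ∀ r, δ ≤ r → μ (ball y r) ≤ ENNReal.ofReal (A * r ^ m))
    (x : X) :
    ∑' l, μ (S l) * ENNReal.ofReal ((δ + infDist x (S l)) ^ (-(m + τ))) ≤
      ENNReal.ofReal (packingConst m τ A * δ ^ (-τ)) := by
  classical
  have hK : ∀ l, ∃ k : ℕ, infDist x (S l) < 2 ^ k * δ := fun l => by
    obtain ⟨k, hk⟩ := pow_unbounded_of_one_lt (infDist x (S l) / δ) one_lt_two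
    exact ⟨k, by rwa [div_lt_iff₀ hδ] at hk⟩
  -- `K l` indexes the dyadic annulus around `x` that `S l` reaches into
  let K l := Nat.find (hK l)
  have hannulus : ∀ k, ∑' l : K ⁻¹' {k},
      μ (S l) * ENNReal.ofReal ((δ + infDist x (S l)) ^ (-(m + τ))) ≤
        ENNReal.ofReal (A * 2 ^ (m + τ) * 4 ^ m * δ ^ (-τ) * (2 ^ (-τ)) ^ k) := by
    intro k
    have hδr : δ ≤ 2 ^ k * δ := le_mul_of_one_le_left hδ.le (one_le_pow₀ one_le_two)
    have hfar : ∀ l : K ⁻¹' {k}, 2 ^ k * δ / 2 ≤ δ + infDist x (S l) := by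
      rintro ⟨l, hl : Nat.find (hK l) = k⟩
      rcases k with _ | k
      · linarith [infDist_nonneg (x := x) (s := S l)]
      · have := Nat.find_min (hK l) (show k < Nat.find (hK l) by omega)
        rw [pow_succ]
        linarith [infDist_nonneg (x := x) (s := S l)]
    have hnear : ∀ l : K ⁻¹' {k}, S l ⊆ ball x (2 * (2 ^ k * δ)) := by
      rintro ⟨l, hl : Nat.find (hK l) = k⟩ z hz
      have := dist_lt_add_of_infDist_lt hδ.le (hdiam l) hz (hl ▸ Nat.find_spec (hK l))
      rw [mem_ball]
      linarith
    refine (tsum_measure_mul_rpow_le_of_subset_annulus (S := fun l : K ⁻¹' {k} => S l) hmτ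
      (fun l => hmeas l) (fun l l' h => hdisj (Subtype.val_injective.ne h)) (fun l => hgrowth l)
      (by positivity) (by linarith) _ hfar hnear).trans_eq ?_
    rw [Real.mul_rpow (by positivity) hδ.le, ← Real.rpow_pow_comm zero_le_two]
    ring_nf
  have hq : (2 : ℝ) ^ (-τ) < 1 := Real.rpow_lt_one_of_one_lt_of_neg one_lt_two (by linarith)
  calc ∑' l, μ (S l) * ENNReal.ofReal ((δ + infDist x (S l)) ^ (-(m + τ)))
      = ∑' k, ∑' l : K ⁻¹' {k}, μ (S l) * ENNReal.ofReal ((δ + infDist x (S l)) ^ (-(m + τ))) :=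
        (ENNReal.tsum_fiberwise _ K).symm
    _ ≤ ∑' k, ENNReal.ofReal (A * 2 ^ (m + τ) * 4 ^ m * δ ^ (-τ) * (2 ^ (-τ)) ^ k) :=
        ENNReal.tsum_le_tsum hannulus
    _ = ENNReal.ofReal (packingConst m τ A * δ ^ (-τ)) := by
        rw [tsum_ofReal_mul_geometric (by positivity) (by positivity) hq, packingConst]
        ring_nf

theorem tsum_decayKernel_mul_measure_le {P : Set X} {x : X} (hx : x ∈ P) {s t : ℝ}
    (hmτ : 0 ≤ m + τ) (hτ : 0 < τ) (hA : 0 ≤ A) (hs : 0 < s) (ht : 0 < t)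
    (hP : ediam P ≤ ENNReal.ofReal s)
    (hmeas : ∀ l, MeasurableSet (S l)) (hdisj : Pairwise (Disjoint on S))
    (hdiam : ∀ l, ediam (S l) ≤ ENNReal.ofReal t)
    (hgrowth : ∀ l, ∀ y ∈ S l, ∀ r, t ≤ r → μ (ball y r) ≤ ENNReal.ofReal (A * r ^ m)) :
    ∑' l, ENNReal.ofReal (decayKernel m τ s t (setDist P (S l))) * μ (S l) ≤
      ENNReal.ofReal (2 ^ (m + τ) * packingConst m τ A *
        (s ^ (τ / 2) * t ^ (τ / 2) * max s t ^ (-τ))) := by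
  set w := 2 ^ (m + τ) * (s ^ (τ / 2) * t ^ (τ / 2))
  have hδ : 0 < max s t := lt_max_of_lt_right ht
  have hterm : ∀ l, ENNReal.ofReal (decayKernel m τ s t (setDist P (S l))) * μ (S l) ≤
      ENNReal.ofReal w *
        (μ (S l) * ENNReal.ofReal ((max s t + infDist x (S l)) ^ (-(m + τ)))) := by
    intro l
    rw [mul_comm (μ _), ← mul_assoc, ← ENNReal.ofReal_mul (by positivity)]
    gcongr
    exact decayKernel_le hmτ hs ht (setDist_nonneg _ _) infDist_nonneg
      (infDist_le_add_setDist hs.le hx hP)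
  calc ∑' l, ENNReal.ofReal (decayKernel m τ s t (setDist P (S l))) * μ (S l)
      ≤ ∑' l, ENNReal.ofReal w *
          (μ (S l) * ENNReal.ofReal ((max s t + infDist x (S l)) ^ (-(m + τ)))) :=
        ENNReal.tsum_le_tsum hterm
    _ = ENNReal.ofReal w *
          ∑' l, μ (S l) * ENNReal.ofReal ((max s t + infDist x (S l)) ^ (-(m + τ))) :=
        ENNReal.tsum_mul_left
    _ ≤ ENNReal.ofReal w * ENNReal.ofReal (packingConst m τ A * max s t ^ (-τ)) := by
        gcongr
        exact tsum_measure_mul_rpow_infDist_le hmτ hτ hA hδ hmeas hdisj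
          (fun l => (hdiam l).trans (ENNReal.ofReal_le_ofReal (le_max_right s t)))
          (fun l y hy r hr => hgrowth l y hy r ((le_max_right s t).trans hr)) x
    _ = _ := by
        rw [← ENNReal.ofReal_mul (by positivity)]
        congr 1
        simp only [w]
        ring

theorem tsum_decayKernel_mul_measure_le_latticeConst {κ : ℝ} (hmτ : 0 ≤ m + τ) (hτ : 0 < τ)
    (hA : 0 ≤ A) (hκ0 : 0 < κ) (hκ1 : κ < 1) {P : Set X} (hPne : P.Nonempty) {p : ℤ}
    (hP : ediam P ≤ ENNReal.ofReal (κ ^ p)) (g : ι → ℤ) (hmeas : ∀ j, MeasurableSet (S j))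
    (hdisj : ∀ j j', j ≠ j' → g j = g j' → Disjoint (S j) (S j'))
    (hdiam : ∀ j, ediam (S j) ≤ ENNReal.ofReal (κ ^ g j))
    (hgrowth : ∀ j, ∀ y ∈ S j, ∀ r, κ ^ g j ≤ r → μ (ball y r) ≤ ENNReal.ofReal (A * r ^ m)) :
    ∑' j, ENNReal.ofReal (decayKernel m τ (κ ^ p) (κ ^ g j) (setDist P (S j))) * μ (S j) ≤
      ENNReal.ofReal (latticeConst m τ A κ) := by
  obtain ⟨x, hx⟩ := hPne
  have hgen : ∀ n : ℤ, ∑' j : g ⁻¹' {n},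
      ENNReal.ofReal (decayKernel m τ (κ ^ p) (κ ^ g j) (setDist P (S j))) * μ (S j) ≤
        ENNReal.ofReal (2 ^ (m + τ) * packingConst m τ A * (κ ^ (τ / 2)) ^ (n - p).natAbs) := by
    intro n
    have hn : ∀ j : g ⁻¹' {n}, g j = n := fun j => j.2
    rw [← zpow_rpow_mul_zpow_rpow_mul_max_rpow_neg hκ0 hκ1.le p n]
    simp only [hn]
    exact tsum_decayKernel_mul_measure_le (S := fun j : g ⁻¹' {n} => S j) hx hmτ hτ hA
      (zpow_pos hκ0 p) (zpow_pos hκ0 n) hP (fun j => hmeas j)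
      (fun j j' h => hdisj j j' (Subtype.val_injective.ne h) ((hn j).trans (hn j').symm))
      (fun ⟨j, hj⟩ => (Set.mem_singleton_iff.1 hj) ▸ hdiam j)
      (fun ⟨j, hj⟩ => (Set.mem_singleton_iff.1 hj) ▸ hgrowth j)
  calc ∑' j, ENNReal.ofReal (decayKernel m τ (κ ^ p) (κ ^ g j) (setDist P (S j))) * μ (S j)
      = ∑' n : ℤ, ∑' j : g ⁻¹' {n},
          ENNReal.ofReal (decayKernel m τ (κ ^ p) (κ ^ g j) (setDist P (S j))) * μ (S j) :=
        (ENNReal.tsum_fiberwise _ g).symm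
    _ ≤ ∑' n : ℤ,
          ENNReal.ofReal (2 ^ (m + τ) * packingConst m τ A * (κ ^ (τ / 2)) ^ (n - p).natAbs) :=
        ENNReal.tsum_le_tsum hgen
    _ ≤ ENNReal.ofReal (latticeConst m τ A κ) :=
        have := packingConst_nonneg (m := m) hτ hA
        tsum_ofReal_mul_geometric_natAbs_le (by positivity) (by positivity)
          (Real.rpow_lt_one hκ0.le hκ1 (by linarith)) p

end Packing

/-- The matrix `T_{Q,R} = s(Q)^{τ/2} s(R)^{τ/2} D(Q,R)^{−(m+τ)} √(μ(Q)μ(R))` indexed by the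
transit cubes of two dyadic lattices (cubes of generation `i` being pairwise disjoint, of
diameter at most `κ^i`, and all non-Ahlfors balls centered in them of radius at most `κ^i`,
i.e. `μ(B(x,r)) ≤ A r^m` for `r ≥ κ^i`) is bounded on `ℓ²`, restricted to pairs with
`s(Q) ≤ s(R)`:  `Σ T_{Q,R} a_Q b_R ≤ C (Σ a_Q²)^{1/2} (Σ b_R²)^{1/2}` where
`C = C(A,m,τ,κ)`. -/
theorem long_range_matrix_bound (m τ A κ : ℝ)
    (hm : 0 < m) (hτ : 0 < τ) (hA : 0 < A) (hκ0 : 0 < κ) (hκ1 : κ < 1) :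
    ∃ C : ℝ, 0 < C ∧
      ∀ (X : Type) [MetricSpace X] [MeasurableSpace X] [BorelSpace X] (μ : Measure X)
        (ιQ ιR : Type) [Countable ιQ] [Countable ιR]
        (Qs : ιQ → Set X) (gQ : ιQ → ℤ) (Rs : ιR → Set X) (gR : ιR → ℤ)
        (a : ιQ → ℝ) (b : ιR → ℝ),
        (∀ i, MeasurableSet (Qs i)) →
        (∀ i i', i ≠ i' → gQ i = gQ i' → Disjoint (Qs i) (Qs i')) →
        (∀ i, 0 < μ (Qs i)) → (∀ i, μ (Qs i) < ⊤) →
        (∀ i, EMetric.diam (Qs i) ≤ ENNReal.ofReal (κ ^ gQ i)) →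
        (∀ i, ∀ x ∈ Qs i, ∀ r : ℝ, κ ^ gQ i ≤ r →
          μ (ball x r) ≤ ENNReal.ofReal (A * r ^ m)) →
        (∀ j, MeasurableSet (Rs j)) →
        (∀ j j', j ≠ j' → gR j = gR j' → Disjoint (Rs j) (Rs j')) →
        (∀ j, 0 < μ (Rs j)) → (∀ j, μ (Rs j) < ⊤) →
        (∀ j, EMetric.diam (Rs j) ≤ ENNReal.ofReal (κ ^ gR j)) →
        (∀ j, ∀ y ∈ Rs j, ∀ r : ℝ, κ ^ gR j ≤ r →
          μ (ball y r) ≤ ENNReal.ofReal (A * r ^ m)) →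
        (∀ i, 0 ≤ a i) → (∀ j, 0 ≤ b j) →
        (∑' p : ιQ × ιR,
          if gR p.2 ≤ gQ p.1 then
            ENNReal.ofReal
              ((κ ^ gQ p.1) ^ (τ / 2) * (κ ^ gR p.2) ^ (τ / 2) /
                  (κ ^ gQ p.1 + κ ^ gR p.2 + setDist (Qs p.1) (Rs p.2)) ^ (m + τ) *
                Real.sqrt ((μ (Qs p.1)).toReal * (μ (Rs p.2)).toReal) * a p.1 * b p.2)
          else 0) ≤
          ENNReal.ofReal C * (∑' i, ENNReal.ofReal (a i ^ 2)) ^ ((1 : ℝ) / 2) *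
            (∑' j, ENNReal.ofReal (b j ^ 2)) ^ ((1 : ℝ) / 2) := by
  refine ⟨latticeConst m τ A κ, latticeConst_pos hτ hA hκ0 hκ1, ?_⟩
  intro X _ _ _ μ ιQ ιR _ _ Qs gQ Rs gR a b hQmeas hQdisj hQpos hQfin hQdiam hQgrowth
    hRmeas hRdisj hRpos hRfin hRdiam hRgrowth ha hb
  have hmτ : 0 ≤ m + τ := by linarith
  let K : ιQ → ιR → ℝ≥0∞ := fun i j => if gR j ≤ gQ i then
    ENNReal.ofReal (decayKernel m τ (κ ^ gQ i) (κ ^ gR j) (setDist (Qs i) (Rs j))) else 0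
  have hrow : ∀ i, ∑' j, K i j * μ (Rs j) ≤ ENNReal.ofReal (latticeConst m τ A κ) := fun i =>
    (ENNReal.tsum_le_tsum fun j => by dsimp only [K]; split_ifs <;> simp).trans
      (tsum_decayKernel_mul_measure_le_latticeConst hmτ hτ hA.le hκ0 hκ1
        (nonempty_of_measure_ne_zero (hQpos i).ne') (hQdiam i) gR hRmeas hRdisj hRdiam hRgrowth)
  have hcol : ∀ j, ∑' i, K i j * μ (Qs i) ≤ ENNReal.ofReal (latticeConst m τ A κ) := fun j =>
    (ENNReal.tsum_le_tsum fun i => by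
        dsimp only [K]; split_ifs <;> simp [decayKernel_comm, setDist_comm]).trans
      (tsum_decayKernel_mul_measure_le_latticeConst hmτ hτ hA.le hκ0 hκ1
        (nonempty_of_measure_ne_zero (hRpos j).ne') (hRdiam j) gQ hQmeas hQdisj hQdiam hQgrowth)
  have hentry : ∀ i j, (if gR j ≤ gQ i then
      ENNReal.ofReal (decayKernel m τ (κ ^ gQ i) (κ ^ gR j) (setDist (Qs i) (Rs j)) *
        √((μ (Qs i)).toReal * (μ (Rs j)).toReal) * a i * b j) else 0) =
      K i j * (μ (Qs i) * μ (Rs j)) ^ (1 / 2 : ℝ) * ENNReal.ofReal (a i) *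
        ENNReal.ofReal (b j) := by
    intro i j
    dsimp only [K]
    split_ifs
    · rw [ENNReal.ofReal_mul' (hb j), ENNReal.ofReal_mul' (ha i),
        ENNReal.ofReal_mul' (Real.sqrt_nonneg _),
        ofReal_sqrt_toReal_mul_toReal (hQfin i).ne (hRfin j).ne]
    · simp
  simp only [ENNReal.ofReal_pow (ha _), ENNReal.ofReal_pow (hb _)]
  rw [ENNReal.tsum_prod']
  exact (schur_test K _ _ hrow hcol _ _).trans_eq'
    (tsum_congr fun i => tsum_congr fun j => (hentry i j).symm)
end

section
/- Let (X,ρ) be a metric space, μ a Borel measure on X, and k a Calderón–Zygmund kernel of order m > 0 with constants C_CZ, τ, δ_CZ. Let κ ∈ (0,1) and set α := τ/(2(m+τ)). Let x₀ ∈ X, σ > 0, L₀ ≥ σ, and let R^{(0)} ⊆ R^{(1)} ⊆ ⋯ ⊆ R^{(N)} be Borel subsets of X such that, with L_j := κ^{−j}·L₀ and some A > 0, one has μ(R^{(j)}) ≤ A·L_j^m and dist(x₀, R^{(j)}∖R^{(j−1)}) ≥ σ^α·L_j^{1−α} for j = 1,…,N, and additionally dist(x₀, X∖R^{(0)}) ≥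 σ/δ_CZ. Let φ ∈ L¹(μ) be supported in the closed ball {x : ρ(x,x₀) ≤ σ} with ∫_X φ dμ = 0. Then |∫_{R^{(N)}∖R^{(0)}} ∫_X k(x,y) φ(x) dμ(x) dμ(y)| ≤ C·A·(σ/L₀)^{τ/2}·‖φ‖_{L¹(μ)}, where C depends only on κ, τ, C_CZ. -/
open MeasureTheory Metric Finset

/-!
Since `∫ φ = 0`, the inner integral at `y` equals `∫ (k(x,y) - k(x₀,y)) φ(x) dμ(x)`, and for
`y ∉ R⁰` the Hölder regularity of `k` in its first variable bounds it by
`C_CZ σ^τ ρ(x₀,y)^{-(m+τ)} ‖φ‖₁`. On the annulus `R^{(j)} ∖ R^{(j-1)}` one has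
`ρ(x₀,y) ≥ σ^α L_j^{1-α}` and mass at most `A L_j^m`; the exponent `α = τ/(2(m+τ))` is exactly
the one for which these combine to `C_CZ A (σ/L_j)^{τ/2} ‖φ‖₁`. As `σ/L_j = κ^j σ/L₀`, the sum
over the annuli is a geometric series with ratio `κ^{τ/2} < 1`.
-/

theorem monotoneOn_Iic_of_le_succ {α : Type*} [Preorder α] {f : ℕ → α} {N : ℕ}
    (hf : ∀ n < N, f n ≤ f (n + 1)) : MonotoneOn f (Set.Iic N) := by
  intro i _ j hj hij
  induction hij with
  | refl => exact le_rfl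
  | step hle ih =>
    have hjN : _ ≤ N := hj
    exact (ih (Set.mem_Iic.2 (by omega))).trans (hf _ (by omega))

theorem rpow_div_weighted_geom_mean_rpow_mul_rpow {σ L m τ : ℝ} (hσ : 0 < σ) (hL : 0 < L)
    (hmτ : 0 < m + τ) :
    σ ^ τ / (σ ^ (τ / (2 * (m + τ))) * L ^ (1 - τ / (2 * (m + τ)))) ^ (m + τ) * L ^ m =
      (σ / L) ^ (τ / 2) := by
  have hσexp : τ / (2 * (m + τ)) * (m + τ) = τ / 2 := by field_simp
  have hLexp : (1 - τ / (2 * (m + τ))) * (m + τ) = m + τ / 2 := by field_simp; ring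
  rw [Real.mul_rpow (by positivity) (by positivity), ← Real.rpow_mul hσ.le,
    ← Real.rpow_mul hL.le, hσexp, hLexp, Real.rpow_add hL, Real.div_rpow hσ.le hL.le,
    show σ ^ τ = σ ^ (τ / 2) * σ ^ (τ / 2) by rw [← Real.rpow_add hσ, add_halves]]
  have : 0 < σ ^ (τ / 2) := by positivity
  have : 0 < L ^ m := by positivity
  field_simp

theorem sum_range_pow_succ_le {r : ℝ} (hr0 : 0 ≤ r) (hr1 : r < 1) (N : ℕ) :
    ∑ j ∈ range N, r ^ (j + 1) ≤ r / (1 - r) := by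
  have := geom_sum_Ico_le_of_lt_one (m := 1) (n := N + 1) hr0 hr1
  rw [sum_Ico_eq_sum_range, Nat.add_sub_cancel, pow_one] at this
  simpa only [add_comm 1] using this

theorem div_div_pow_rpow {σ L κ s : ℝ} (hσ : 0 ≤ σ) (hL : 0 ≤ L) (hκ : 0 < κ) (j : ℕ) :
    (σ / (L / κ ^ j)) ^ s = (σ / L) ^ s * (κ ^ s) ^ j := by
  rw [div_div_eq_mul_div, mul_div_right_comm,
    Real.mul_rpow (div_nonneg hσ hL) (by positivity), Real.rpow_pow_comm hκ.le]

section Integrals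

variable {X E : Type*} [MeasurableSpace X] [NormedAddCommGroup E] [NormedSpace ℝ E]
  {μ : Measure X}

theorem norm_integral_mul_le_of_integral_eq_zero {g φ : X → ℂ} (c : ℂ) {B : ℝ}
    (hg : AEStronglyMeasurable g μ) (hφ : Integrable φ μ) (hφ0 : ∫ x, φ x ∂μ = 0)
    (hB : ∀ x, φ x ≠ 0 → ‖g x - c‖ ≤ B) :
    ‖∫ x, g x * φ x ∂μ‖ ≤ B * ∫ x, ‖φ x‖ ∂μ := by
  have hbound : ∀ x, ‖(g x - c) * φ x‖ ≤ B * ‖φ x‖ := by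
    intro x
    by_cases hx : φ x = 0
    · simp [hx]
    · rw [norm_mul]
      exact mul_le_mul_of_nonneg_right (hB x hx) (norm_nonneg _)
  have hint : Integrable (fun x => (g x - c) * φ x) μ :=
    (hφ.norm.const_mul B).mono' ((hg.sub aestronglyMeasurable_const).mul hφ.1)
      (.of_forall hbound)
  have hcancel : ∫ x, g x * φ x ∂μ = ∫ x, (g x - c) * φ x ∂μ := by
    calc ∫ x, g x * φ x ∂μ = ∫ x, ((g x - c) * φ x + c * φ x) ∂μ := by
          congr 1; funext x; ring
      _ = ∫ x, (g x - c) * φ x ∂μ := by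
          rw [integral_add hint (hφ.const_mul c), integral_const_mul, hφ0, mul_zero,
            add_zero]
  calc ‖∫ x, g x * φ x ∂μ‖ ≤ ∫ x, ‖(g x - c) * φ x‖ ∂μ :=
        hcancel ▸ norm_integral_le_integral_norm _
    _ ≤ ∫ x, B * ‖φ x‖ ∂μ := integral_mono hint.norm (hφ.norm.const_mul B) hbound
    _ = B * ∫ x, ‖φ x‖ ∂μ := integral_const_mul _ _

theorem norm_setIntegral_le_of_norm_le_of_measure_le {F : X → E} {S : Set X} {B M : ℝ}
    (hB : 0 ≤ B) (hM : 0 ≤ M) (hF : ∀ y ∈ S, ‖F y‖ ≤ B) (hS : μ S ≤ ENNReal.ofReal M) :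
    ‖∫ y in S, F y ∂μ‖ ≤ B * M := by
  calc ‖∫ y in S, F y ∂μ‖ ≤ B * μ.real S :=
        norm_setIntegral_le_of_norm_le_const (hS.trans_lt ENNReal.ofReal_lt_top) hF
    _ ≤ B * M := by gcongr; exact ENNReal.toReal_le_of_le_ofReal hM hS

theorem setIntegral_diff_eq_sum_of_le_succ {F : X → E} {R : ℕ → Set X} {N : ℕ}
    (hR : ∀ j, MeasurableSet (R j)) (hmono : ∀ j < N, R j ⊆ R (j + 1))
    (hF : IntegrableOn F (R N \ R 0) μ) :
    ∫ y in R N \ R 0, F y ∂μ = ∑ j ∈ range N, ∫ y in R (j + 1) \ R j, F y ∂μ := by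
  induction N with
  | zero => simp
  | succ n ih =>
    have hmono' : ∀ j < n, R j ⊆ R (j + 1) := fun j hj => hmono j (by omega)
    have h0n : R 0 ⊆ R n :=
      monotoneOn_Iic_of_le_succ hmono' (Set.mem_Iic.2 n.zero_le) (Set.mem_Iic.2 le_rfl)
        n.zero_le
    have hsplit : R (n + 1) \ R 0 = (R n \ R 0) ∪ (R (n + 1) \ R n) := by
      rw [Set.union_comm, Set.sdiff_union_sdiff_cancel (hmono n n.lt_succ_self) h0n]
    rw [hsplit] at hF ⊢
    rw [setIntegral_union (Set.disjoint_sdiff_right.mono_left Set.sdiff_subset)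
      ((hR _).diff (hR n)) hF.left_of_union hF.right_of_union,
      ih hmono' hF.left_of_union, sum_range_succ]

theorem norm_setIntegral_diff_le_sum_of_le_succ {F : X → E} {R : ℕ → Set X} {N : ℕ}
    (hR : ∀ j, MeasurableSet (R j)) (hmono : ∀ j < N, R j ⊆ R (j + 1)) {b : ℕ → ℝ}
    (hb : ∀ j < N, ‖∫ y in R (j + 1) \ R j, F y ∂μ‖ ≤ b j) :
    ‖∫ y in R N \ R 0, F y ∂μ‖ ≤ ∑ j ∈ range N, b j := by
  by_cases hF : IntegrableOn F (R N \ R 0) μ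
  · rw [setIntegral_diff_eq_sum_of_le_succ hR hmono hF]
    exact (norm_sum_le _ _).trans (sum_le_sum fun j hj => hb j (mem_range.1 hj))
  · rw [integral_undef hF, norm_zero]
    exact sum_nonneg fun j hj => (norm_nonneg _).trans (hb j (mem_range.1 hj))

end Integrals

theorem norm_setIntegral_le_of_decay_on_annulus {X E : Type*} [MetricSpace X]
    [MeasurableSpace X] [NormedAddCommGroup E] [NormedSpace ℝ E] {μ : Measure X}
    {F : X → E} {S : Set X} {x₀ : X} {C Φ σ L A m τ : ℝ} (hC : 0 ≤ C) (hΦ : 0 ≤ Φ)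
    (hσ : 0 < σ) (hL : 0 < L) (hA : 0 ≤ A) (hmτ : 0 < m + τ)
    (hF : ∀ y ∈ S, ‖F y‖ ≤ C * σ ^ τ / dist x₀ y ^ (m + τ) * Φ)
    (hdist : ∀ y ∈ S, σ ^ (τ / (2 * (m + τ))) * L ^ (1 - τ / (2 * (m + τ))) ≤ dist x₀ y)
    (hS : μ S ≤ ENNReal.ofReal (A * L ^ m)) :
    ‖∫ y in S, F y ∂μ‖ ≤ C * A * (σ / L) ^ (τ / 2) * Φ := by
  set D := σ ^ (τ / (2 * (m + τ))) * L ^ (1 - τ / (2 * (m + τ)))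
  have hD : 0 < D := by positivity
  calc ‖∫ y in S, F y ∂μ‖ ≤ (C * σ ^ τ / D ^ (m + τ) * Φ) * (A * L ^ m) :=
        norm_setIntegral_le_of_norm_le_of_measure_le (by positivity) (by positivity)
          (fun y hy => (hF y hy).trans (by gcongr; exact hdist y hy)) hS
    _ = C * A * (σ ^ τ / D ^ (m + τ) * L ^ m) * Φ := by ring
    _ = C * A * (σ / L) ^ (τ / 2) * Φ := by
        rw [rpow_div_weighted_geom_mean_rpow_mul_rpow hσ hL hmτ]

theorem norm_integral_kernel_mul_le_of_far {X : Type*} [MetricSpace X] [MeasurableSpace X]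
    {μ : Measure X} {k : X → X → ℂ} {φ : X → ℂ} {C m τ δ σ : ℝ} {x₀ y : X}
    (hk : ∀ u v v' : X, u ≠ v → u ≠ v' → dist v v' ≤ δ * dist u v →
      ‖k v u - k v' u‖ ≤ C * dist v v' ^ τ / dist u v ^ (m + τ))
    (hky : AEStronglyMeasurable (fun x => k x y) μ) (hC : 0 ≤ C) (hτ : 0 ≤ τ)
    (hδ0 : 0 < δ) (hδ1 : δ < 1) (hσ : 0 < σ) (hφ : Integrable φ μ)
    (hsupp : ∀ x, φ x ≠ 0 → dist x x₀ ≤ σ) (hmean : ∫ x, φ x ∂μ = 0)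
    (hy : σ / δ ≤ dist x₀ y) :
    ‖∫ x, k x y * φ x ∂μ‖ ≤ C * σ ^ τ / dist x₀ y ^ (m + τ) * ∫ x, ‖φ x‖ ∂μ := by
  refine norm_integral_mul_le_of_integral_eq_zero (k x₀ y) hky hφ hmean fun x hx => ?_
  have hxσ : dist x x₀ ≤ σ := hsupp x hx
  have hσy : σ < dist x₀ y :=
    ((lt_div_iff₀ hδ0).2 (mul_lt_of_lt_one_right hσ hδ1)).trans_le hy
  have hyx₀ : y ≠ x₀ := by rintro rfl; rw [dist_self] at hσy; linarith
  have hyx : y ≠ x := by rintro rfl; rw [dist_comm] at hσy; linarith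
  have hnear : dist x₀ x ≤ δ * dist y x₀ := by
    rw [dist_comm x₀ x, dist_comm y x₀]
    calc dist x x₀ ≤ σ := hxσ
      _ = δ * (σ / δ) := by field_simp
      _ ≤ δ * dist x₀ y := by gcongr
  calc ‖k x y - k x₀ y‖ = ‖k x₀ y - k x y‖ := norm_sub_rev _ _
    _ ≤ C * dist x₀ x ^ τ / dist y x₀ ^ (m + τ) := hk y x₀ x hyx₀ hyx hnear
    _ ≤ C * σ ^ τ / dist x₀ y ^ (m + τ) := by
        rw [dist_comm y x₀, dist_comm x₀ x]; gcongr

/-- Estimate for the pairing of a mean-zero function `φ` supported in the ball of radius `σ`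
around `x₀` with `T*(χ_{R^N∖R⁰})`, where `R⁰ ⊆ ⋯ ⊆ R^N` is an ascending chain of sets of
scales `L_j = κ^{−j}L₀` satisfying `μ(R^{(j)}) ≤ A L_j^m`,
`dist(x₀, R^{(j)}∖R^{(j−1)}) ≥ σ^α L_j^{1−α}` (with `α = τ/(2(m+τ))`), and
`dist(x₀, X∖R⁰) ≥ σ/δ_CZ`:
`|∫_{R^N∖R⁰} ∫ k(x,y) φ(x) dμ(x) dμ(y)| ≤ C·A·(σ/L₀)^{τ/2}·‖φ‖_{L¹}` with
`C = C(κ,τ,C_CZ)`. -/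
theorem paraproduct_tail_estimate (κ τ C_CZ : ℝ)
    (hκ0 : 0 < κ) (hκ1 : κ < 1) (hτ : 0 < τ) (hCCZ : 0 < C_CZ) :
    ∃ C : ℝ, 0 < C ∧
      ∀ (X : Type) [MetricSpace X] [MeasurableSpace X] [BorelSpace X]
        (μ : Measure X) (m δ_CZ A σ L₀ : ℝ) (k : X → X → ℂ) (x₀ : X) (N : ℕ)
        (R : ℕ → Set X) (φ : X → ℂ),
        0 < m → 0 < δ_CZ → δ_CZ < 1 → 0 < A → 0 < σ → σ ≤ L₀ →
        Measurable (Function.uncurry k) →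
        (∀ x y : X, x ≠ y → ‖k x y‖ ≤ C_CZ / dist x y ^ m) →
        (∀ x y y' : X, x ≠ y → x ≠ y' → dist y y' ≤ δ_CZ * dist x y →
          ‖k x y - k x y'‖ + ‖k y x - k y' x‖ ≤ C_CZ * dist y y' ^ τ / dist x y ^ (m + τ)) →
        (∀ j, MeasurableSet (R j)) →
        (∀ j, j < N → R j ⊆ R (j + 1)) →
        (∀ j, 1 ≤ j → j ≤ N → μ (R j) ≤ ENNReal.ofReal (A * (L₀ / κ ^ j) ^ m)) →
        (∀ j, 1 ≤ j → j ≤ N → ∀ y ∈ R j \ R (j - 1),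
          σ ^ (τ / (2 * (m + τ))) * (L₀ / κ ^ j) ^ (1 - τ / (2 * (m + τ))) ≤ dist x₀ y) →
        (∀ y, y ∉ R 0 → σ / δ_CZ ≤ dist x₀ y) →
        Integrable φ μ →
        (∀ x, φ x ≠ 0 → dist x x₀ ≤ σ) →
        (∫ x, φ x ∂μ) = 0 →
        ‖∫ y in R N \ R 0, (∫ x, k x y * φ x ∂μ) ∂μ‖ ≤
          C * A * (σ / L₀) ^ (τ / 2) * ∫ x, ‖φ x‖ ∂μ := by
  set r := κ ^ (τ / 2)
  have hr0 : 0 < r := by positivity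
  have hr1 : r < 1 := Real.rpow_lt_one hκ0.le hκ1 (by positivity)
  have h1r : 0 < 1 - r := sub_pos.2 hr1
  refine ⟨C_CZ * r / (1 - r), by positivity, ?_⟩
  intro X _ _ _ μ m δ_CZ A σ L₀ k x₀ N R φ hm hδ0 hδ1 hA hσ hσL hkm _ hk hRm hRmono hRμ
    hRdist hRfar hφ hsupp hmean
  have hL₀ : 0 < L₀ := hσ.trans_le hσL
  set Φ := ∫ x, ‖φ x‖ ∂μ
  have hΦ : 0 ≤ Φ := integral_nonneg fun _ => norm_nonneg _
  have hfar : ∀ y ∉ R 0,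
      ‖∫ x, k x y * φ x ∂μ‖ ≤ C_CZ * σ ^ τ / dist x₀ y ^ (m + τ) * Φ :=
    fun y hy => norm_integral_kernel_mul_le_of_far
      (fun u v v' huv huv' hvv' =>
        (le_add_of_nonneg_left (norm_nonneg _)).trans (hk u v v' huv huv' hvv'))
      (hkm.comp measurable_prodMk_right).aestronglyMeasurable hCCZ.le hτ.le hδ0 hδ1 hσ hφ
      hsupp hmean (hRfar y hy)
  have hannulus : ∀ j < N, ‖∫ y in R (j + 1) \ R j, ∫ x, k x y * φ x ∂μ ∂μ‖ ≤
      C_CZ * A * (σ / L₀) ^ (τ / 2) * Φ * r ^ (j + 1) := by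
    intro j hj
    have h0j : R 0 ⊆ R j := monotoneOn_Iic_of_le_succ hRmono (Set.mem_Iic.2 N.zero_le)
      (Set.mem_Iic.2 hj.le) j.zero_le
    have := norm_setIntegral_le_of_decay_on_annulus hCCZ.le hΦ hσ
      (by positivity : 0 < L₀ / κ ^ (j + 1)) hA.le (add_pos hm hτ)
      (fun y hy => hfar y fun h => hy.2 (h0j h)) (hRdist (j + 1) (by omega) (by omega))
      ((measure_mono Set.sdiff_subset).trans (hRμ (j + 1) (by omega) (by omega)))
    rw [div_div_pow_rpow hσ.le hL₀.le hκ0] at this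
    exact this.trans_eq (by ring)
  calc ‖∫ y in R N \ R 0, ∫ x, k x y * φ x ∂μ ∂μ‖
      ≤ ∑ j ∈ range N, C_CZ * A * (σ / L₀) ^ (τ / 2) * Φ * r ^ (j + 1) :=
        norm_setIntegral_diff_le_sum_of_le_succ hRm hRmono hannulus
    _ = C_CZ * A * (σ / L₀) ^ (τ / 2) * Φ * ∑ j ∈ range N, r ^ (j + 1) := by rw [mul_sum]
    _ ≤ C_CZ * A * (σ / L₀) ^ (τ / 2) * Φ * (r / (1 - r)) := by
        gcongr; exact sum_range_pow_succ_le hr0.le hr1 N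
    _ = C_CZ * r / (1 - r) * A * (σ / L₀) ^ (τ / 2) * Φ := by ring
end
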